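/- arXiv:2101.06946 — 5 statements merged into one kernel-verified Lean document; each statement's English description precedes it below -/
import Mathlib

section
/- Let n ≥ 3 be an integer. Let G ⊆ ℤ×ℤ be the set of all pairs (n−2k, n−2t) with integers 0 ≤ k ≤ n and 0 ≤ t ≤ n, with the single pair (n,n) removed. Let S ⊆ G be a nonempty subset that is downward closed in G, i.e., whenever (a,b) ∈ S and (a',b') ∈ G satisfy a' ≤ a and b' ≤ b, then (a',b') ∈ S. Then Σ_{(a,b)∈S} ( −2n − (n²+2n)·(a+b) ) ≥ 0, and equality holds if and only if S = G. -/
/-!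
Write the weights as `(2k - n, 2t - n)` with `(k, t) ∈ [0, n]²`, so that `G` is the grid minus its
top corner and `S` becomes a nonempty lower set `U` of the grid avoiding `(n, n)`. Every row of `U`
is an initial segment `[0, L)`, and `∑_{k < L} (2k - n) = -L (n + 1 - L)` is `≤ 0`, and even `≤ -n`
when `0 < L ≤ n`. At least two rows or columns of `U` are of the latter kind, so
`∑_S (a + b) ≤ -2n`. The sum in question is therefore at least `2n (n² + 2n - #S) ≥ 0`, and
`n² + 2n = #G` forces `S = G` in the case of equality.
-/

open Finset

theorem Finset.eq_range_card_of_isLowerSet {K : Finset ℕ} (hK : IsLowerSet (K : Set ℕ)) :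
    K = range #K := by
  ext k
  rw [mem_range]
  constructor
  · intro hk
    have : range (k + 1) ⊆ K := fun j hj => hK (Nat.lt_succ_iff.mp (mem_range.mp hj)) hk
    simpa using card_le_card this
  · intro hk
    by_contra hkK
    have : K ⊆ range k := fun j hj => mem_range.mpr <| lt_of_not_ge fun hkj => hkK (hK hkj hj)
    have := card_le_card this
    rw [card_range] at this
    omega

namespace WeightGrid

theorem sum_range_two_mul_sub (n L : ℕ) :
    ∑ k ∈ range L, (2 * (k : ℤ) - n) = -(L * (n + 1 - L)) := by
  induction L with
  | zero => simp
  | succ L ih => rw [sum_range_succ, ih]; push_cast; ring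

variable {n : ℕ}

theorem sum_two_mul_sub_nonpos {K : Finset ℕ} (hK : IsLowerSet (K : Set ℕ)) (hKn : K ⊆ Iic n) :
    ∑ k ∈ K, (2 * (k : ℤ) - n) ≤ 0 := by
  have hcard : (#K : ℤ) ≤ n + 1 := by exact_mod_cast (card_le_card hKn).trans_eq (Nat.card_Iic n)
  rw [eq_range_card_of_isLowerSet hK, sum_range_two_mul_sub]
  nlinarith

theorem sum_two_mul_sub_le_neg {K : Finset ℕ} (hK : IsLowerSet (K : Set ℕ)) (h0 : 0 ∈ K)
    (hn : n ∉ K) : ∑ k ∈ K, (2 * (k : ℤ) - n) ≤ -n := by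
  rw [eq_range_card_of_isLowerSet hK, mem_range] at h0 hn
  have h1 : (1 : ℤ) ≤ #K := by exact_mod_cast h0
  have h2 : (#K : ℤ) ≤ n := by exact_mod_cast not_lt.mp hn
  rw [eq_range_card_of_isLowerSet hK, sum_range_two_mul_sub]
  nlinarith

def row (U : Finset (ℕ × ℕ)) (t : ℕ) : Finset ℕ := (U.filter (·.2 = t)).image Prod.fst

@[simp]
theorem mem_row {U : Finset (ℕ × ℕ)} {t k : ℕ} : k ∈ row U t ↔ (k, t) ∈ U := by
  simp [row]

theorem isLowerSet_row {U : Finset (ℕ × ℕ)} (hU : IsLowerSet (U : Set (ℕ × ℕ))) (t : ℕ) :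
    IsLowerSet (row U t : Set ℕ) := fun _ _ hjk hk =>
  mem_row.mpr <| hU (Prod.mk_le_mk.mpr ⟨hjk, le_rfl⟩) (mem_row.mp hk)

theorem sum_fst_eq_sum_row (U : Finset (ℕ × ℕ)) (f : ℕ → ℤ) :
    ∑ q ∈ U, f q.1 = ∑ t ∈ U.image Prod.snd, ∑ k ∈ row U t, f k :=
  sum_finset_product_right U _ _ fun q => by simpa using fun h => ⟨q.1, h⟩

theorem sum_two_mul_fst_sub_le {U : Finset (ℕ × ℕ)} (hU : IsLowerSet (U : Set (ℕ × ℕ)))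
    (hUn : U ⊆ Iic (n, n)) {T : Finset ℕ} (hT : ∀ t ∈ T, (0, t) ∈ U ∧ (n, t) ∉ U) :
    ∑ q ∈ U, (2 * (q.1 : ℤ) - n) ≤ -(n * #T) := by
  have hrow_le : ∀ t, row U t ⊆ Iic n := fun t k hk => by
    simpa using (mem_Iic.mp (hUn (mem_row.mp hk))).1
  have hTU : T ⊆ U.image Prod.snd := fun t ht => mem_image.mpr ⟨_, (hT t ht).1, rfl⟩
  calc ∑ q ∈ U, (2 * (q.1 : ℤ) - n)
      = ∑ t ∈ U.image Prod.snd, ∑ k ∈ row U t, (2 * (k : ℤ) - n) :=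
        sum_fst_eq_sum_row U fun k => 2 * (k : ℤ) - n
    _ ≤ ∑ t ∈ U.image Prod.snd, if t ∈ T then -(n : ℤ) else 0 := by
      refine sum_le_sum fun t _ => ?_
      split_ifs with ht
      · exact sum_two_mul_sub_le_neg (isLowerSet_row hU t) (mem_row.mpr (hT t ht).1)
          (fun h => (hT t ht).2 (mem_row.mp h))
      · exact sum_two_mul_sub_nonpos (isLowerSet_row hU t) (hrow_le t)
    _ = -(n * #T) := by
      rw [sum_ite_mem, inter_eq_right.mpr hTU, sum_const, nsmul_eq_mul, mul_neg, mul_comm]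

theorem isLowerSet_image_swap {U : Finset (ℕ × ℕ)} (hU : IsLowerSet (U : Set (ℕ × ℕ))) :
    IsLowerSet (U.image Prod.swap : Set (ℕ × ℕ)) := by
  rw [coe_image, Set.image_swap_eq_preimage_swap]
  exact hU.preimage fun _ _ h => Prod.swap_le_swap.mpr h

theorem sum_two_mul_sub_add_two_mul_sub_le {U : Finset (ℕ × ℕ)}
    (hU : IsLowerSet (U : Set (ℕ × ℕ))) (hUn : U ⊆ Iio (n, n)) (hne : U.Nonempty) :
    ∑ q ∈ U, ((2 * (q.1 : ℤ) - n) + (2 * q.2 - n)) ≤ -(2 * n) := by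
  obtain ⟨q, hq⟩ := hne
  have h00 : (0, 0) ∈ U := hU (Prod.mk_le_mk.mpr ⟨Nat.zero_le _, Nat.zero_le _⟩) hq
  have hnn : (n, n) ∉ U := fun h => by simpa using hUn h
  have hn : 0 ≠ n := fun h => hnn (h ▸ h00)
  set V := U.image Prod.swap
  have hUn' : U ⊆ Iic (n, n) := hUn.trans Iio_subset_Iic_self
  have hVn : V ⊆ Iic (n, n) := fun p hp => by
    obtain ⟨q, hq, rfl⟩ := mem_image.mp hp
    simpa using (mem_Iic.mp (hUn' hq))
  have hmemV : ∀ a b, (a, b) ∈ V ↔ (b, a) ∈ U := fun a b => by simp [V]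
  have hsplit : ∑ q ∈ U, ((2 * (q.1 : ℤ) - n) + (2 * q.2 - n))
      = ∑ q ∈ U, (2 * (q.1 : ℤ) - n) + ∑ q ∈ V, (2 * (q.1 : ℤ) - n) := by
    rw [sum_add_distrib, sum_image (fun _ _ _ _ h => Prod.swap_injective h)]
    rfl
  -- Row `0` or column `n` is proper according as `(n, 0) ∉ U` or `(n, 0) ∈ U`; likewise
  -- row `n` or column `0` according to `(0, n)`. The columns of `U` are the rows of `V`.
  obtain ⟨TU, TV, hTU, hTV, hcard⟩ : ∃ TU TV : Finset ℕ,
      (∀ t ∈ TU, (0, t) ∈ U ∧ (n, t) ∉ U) ∧ (∀ t ∈ TV, (0, t) ∈ V ∧ (n, t) ∉ V) ∧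
        2 ≤ #TU + #TV := by
    by_cases hX : (n, 0) ∈ U <;> by_cases hY : (0, n) ∈ U
    · exact ⟨{n}, {n}, by simp [hY, hnn], by simp [hmemV, hX, hnn], by simp⟩
    · exact ⟨∅, {0, n}, by simp, by simp [hmemV, hX, hY, hnn, h00], by simp [card_pair hn]⟩
    · exact ⟨{0, n}, ∅, by simp [hX, hY, hnn, h00], by simp, by simp [card_pair hn]⟩
    · exact ⟨{0}, {0}, by simp [hX, h00], by simp [hmemV, hY, h00], by simp⟩
  have hcard' : (2 : ℤ) ≤ #TU + #TV := by exact_mod_cast hcard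
  rw [hsplit]
  nlinarith [sum_two_mul_fst_sub_le hU hUn' hTU, sum_two_mul_fst_sub_le (isLowerSet_image_swap hU) hVn hTV]

def toWeight (n : ℕ) (q : ℕ × ℕ) : ℤ × ℤ := (2 * q.1 - n, 2 * q.2 - n)

theorem toWeight_injective (n : ℕ) : Function.Injective (toWeight n) := fun p q h => by
  simp only [toWeight, Prod.mk.injEq] at h
  ext <;> omega

theorem sum_image_toWeight (n : ℕ) (V : Finset (ℕ × ℕ)) :
    ∑ p ∈ V.image (toWeight n), (-2 * (n : ℤ) - ((n : ℤ) ^ 2 + 2 * n) * (p.1 + p.2)) =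
      -2 * n * #V - (n ^ 2 + 2 * n) * ∑ q ∈ V, ((2 * (q.1 : ℤ) - n) + (2 * q.2 - n)) := by
  rw [sum_image fun _ _ _ _ h => toWeight_injective n h]
  simp only [toWeight, sum_sub_distrib, sum_const, nsmul_eq_mul, ← mul_sum]
  ring

theorem image_weights_eq (n : ℕ) :
    ((range (n + 1) ×ˢ range (n + 1)).image
        fun kt => ((n : ℤ) - 2 * kt.1, (n : ℤ) - 2 * kt.2)).erase ((n : ℤ), (n : ℤ)) =
      (Iio (n, n)).image (toWeight n) := by
  have hgrid : (range (n + 1) ×ˢ range (n + 1)).image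
      (fun kt => ((n : ℤ) - 2 * kt.1, (n : ℤ) - 2 * kt.2)) = (Iic (n, n)).image (toWeight n) := by
    ext p
    simp only [mem_image, mem_product, mem_range, mem_Iic, Prod.exists, Prod.mk_le_mk, toWeight,
      Nat.lt_succ_iff]
    constructor <;> rintro ⟨k, t, ⟨hk, ht⟩, rfl⟩ <;>
      exact ⟨n - k, n - t, by omega, by ext <;> simp <;> omega⟩
  rw [hgrid, ← Iic_erase, image_erase (toWeight_injective n)]
  congr 1
  simp [toWeight]
  ring

theorem card_Iio_pair (n : ℕ) : #(Iio (n, n)) = n ^ 2 + 2 * n := by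
  rw [card_Iio_eq_card_Iic_sub_one, card_Iic_prod, Nat.card_Iic]
  ring_nf
  omega

theorem sum_Iio_two_mul_sub_add_two_mul_sub (n : ℕ) :
    ∑ q ∈ Iio (n, n), ((2 * (q.1 : ℤ) - n) + (2 * q.2 - n)) = -(2 * n) := by
  have hline : ∑ k ∈ Iic n, (2 * (k : ℤ) - n) = 0 := by
    rw [← Nat.range_succ_eq_Iic, sum_range_two_mul_sub]; push_cast; ring
  rw [← Iic_erase, sum_erase_eq_sub (mem_Iic.mpr le_rfl), ← Iic_product_Iic, sum_product]
  simp only [sum_add_distrib, sum_const, ← smul_sum, hline, smul_zero]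
  ring

theorem isLowerSet_of_image_toWeight {U : Finset (ℕ × ℕ)} (hU : U ⊆ Iio (n, n))
    (hdc : ∀ p ∈ U.image (toWeight n), ∀ q ∈ (Iio (n, n)).image (toWeight n),
      q.1 ≤ p.1 → q.2 ≤ p.2 → q ∈ U.image (toWeight n)) :
    IsLowerSet (U : Set (ℕ × ℕ)) := by
  intro a b hba ha
  have hb : b ∈ Iio (n, n) := mem_Iio.mpr (hba.trans_lt (mem_Iio.mp (hU ha)))
  obtain ⟨h1, h2⟩ := hba
  refine (toWeight_injective n).mem_finset_image.mp
    (hdc _ (mem_image_of_mem _ ha) _ (mem_image_of_mem _ hb) ?_ ?_)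
  all_goals simp only [toWeight]; omega

end WeightGrid

open WeightGrid

theorem statement_2_general (n : ℕ)
    (G : Finset (ℤ × ℤ))
    (hG : G = ((Finset.range (n+1) ×ˢ Finset.range (n+1)).image
        (fun kt => ((n : ℤ) - 2 * kt.1, (n : ℤ) - 2 * kt.2))).erase ((n : ℤ), (n : ℤ)))
    (S : Finset (ℤ × ℤ)) (hSsub : S ⊆ G) (hSne : S.Nonempty)
    (hdc : ∀ p ∈ S, ∀ q ∈ G, q.1 ≤ p.1 → q.2 ≤ p.2 → q ∈ S) :
    0 ≤ ∑ p ∈ S, (-2 * (n : ℤ) - ((n : ℤ) ^ 2 + 2 * (n : ℤ)) * (p.1 + p.2)) ∧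
      ((∑ p ∈ S, (-2 * (n : ℤ) - ((n : ℤ) ^ 2 + 2 * (n : ℤ)) * (p.1 + p.2))) = 0 ↔ S = G) := by
  rw [image_weights_eq] at hG
  subst hG
  obtain ⟨U, hU, rfl⟩ := subset_image_iff.mp hSsub
  have hsum := sum_two_mul_sub_add_two_mul_sub_le (isLowerSet_of_image_toWeight hU hdc) hU
    (image_nonempty.mp hSne)
  have hcard : (#U : ℤ) ≤ n ^ 2 + 2 * n := by
    exact_mod_cast (card_le_card hU).trans_eq (card_Iio_pair n)
  have hpos : (1 : ℤ) ≤ #U := by exact_mod_cast (image_nonempty.mp hSne).card_pos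
  have hn : (0 : ℤ) < n := by nlinarith
  have hbound := mul_le_mul_of_nonneg_left hsum (by positivity : (0 : ℤ) ≤ n ^ 2 + 2 * n)
  rw [sum_image_toWeight]
  refine ⟨by nlinarith, fun h => ?_, fun h => ?_⟩
  · congr 1
    refine eq_of_subset_of_card_le hU ?_
    have : 2 * n * (n ^ 2 + 2 * n : ℤ) ≤ 2 * n * #U := by linarith
    rw [card_Iio_pair]
    exact_mod_cast le_of_mul_le_mul_left this (by positivity)
  · rw [image_injective (toWeight_injective n) h, sum_Iio_two_mul_sub_add_two_mul_sub,
      card_Iio_pair]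
    push_cast
    ring

/-- Let `n ≥ 3`. Let `G ⊆ ℤ × ℤ` be the set of pairs `(n − 2k, n − 2t)` with
`0 ≤ k ≤ n`, `0 ≤ t ≤ n`, with the single pair `(n, n)` removed. For any nonempty subset
`S ⊆ G` which is downward closed in `G`, the sum `Σ_{(a,b) ∈ S} (−2n − (n² + 2n)(a + b))`
is nonnegative, and it vanishes exactly when `S = G`. -/
theorem statement_2 (n : ℕ) (hn : 3 ≤ n)
    (G : Finset (ℤ × ℤ))
    (hG : G = ((Finset.range (n+1) ×ˢ Finset.range (n+1)).image
        (fun kt => ((n : ℤ) - 2 * kt.1, (n : ℤ) - 2 * kt.2))).erase ((n : ℤ), (n : ℤ)))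
    (S : Finset (ℤ × ℤ)) (hSsub : S ⊆ G) (hSne : S.Nonempty)
    (hdc : ∀ p ∈ S, ∀ q ∈ G, q.1 ≤ p.1 → q.2 ≤ p.2 → q ∈ S) :
    0 ≤ ∑ p ∈ S, (-2 * (n : ℤ) - ((n : ℤ) ^ 2 + 2 * (n : ℤ)) * (p.1 + p.2)) ∧
      ((∑ p ∈ S, (-2 * (n : ℤ) - ((n : ℤ) ^ 2 + 2 * (n : ℤ)) * (p.1 + p.2))) = 0 ↔ S = G) :=
  statement_2_general n G hG S hSsub hSne hdc
end

section
/- Let k be a field and n ≥ 3 an integer. Let A = k[x₀,x₁,x₂,x₃]/(x₀·𝔪₀^{n−2} + 𝔪₀^{n−1}) with its induced grading. Then multiplication by x₀² defines a k-linear bijection from the homogeneous component A_{n−3} onto the homogeneous component A_{n−1}, and both components have dimension binomial(n,3) over k. -/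
open MvPolynomial

/-- The ideal `𝔪₀ = (x₁, x₂, x₃)` of `k[x₀, x₁, x₂, x₃]`. -/
noncomputable def idealM0 (k : Type*) [Field k] : Ideal (MvPolynomial (Fin 4) k) :=
  Ideal.span {MvPolynomial.X 1, MvPolynomial.X 2, MvPolynomial.X 3}

/-- The ideal `x₀·𝔪₀^{n−2} + 𝔪₀^{n−1}` of `k[x₀, x₁, x₂, x₃]`, with `n = m + 3`. -/
noncomputable def idealJ (k : Type*) [Field k] (m : ℕ) : Ideal (MvPolynomial (Fin 4) k) :=
  Ideal.span {(MvPolynomial.X 0 : MvPolynomial (Fin 4) k)} * (idealM0 k) ^ (m + 1)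
    + (idealM0 k) ^ (m + 2)

/-- The degree-`d` homogeneous component of the graded algebra
`A = k[x₀, x₁, x₂, x₃]/(x₀·𝔪₀^{n−2} + 𝔪₀^{n−1})`, with `n = m + 3`: the image of the space
of homogeneous polynomials of degree `d` in the quotient. -/
noncomputable def Acomp (k : Type*) [Field k] (m d : ℕ) :
    Submodule k (MvPolynomial (Fin 4) k ⧸ idealJ k m) :=
  Submodule.map (Ideal.Quotient.mkₐ k (idealJ k m)).toLinearMap
    (MvPolynomial.homogeneousSubmodule (Fin 4) k d)

/-- Multiplication by (the class of) `x₀²` on `A`, as a `k`-linear map. -/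
noncomputable def mulX0sq (k : Type*) [Field k] (m : ℕ) :
    (MvPolynomial (Fin 4) k ⧸ idealJ k m) →ₗ[k] (MvPolynomial (Fin 4) k ⧸ idealJ k m) :=
  LinearMap.mulLeft k (Ideal.Quotient.mk (idealJ k m) (MvPolynomial.X 0 ^ 2))

/-!
`J = x₀·𝔪₀^{n−2} + 𝔪₀^{n−1}` is a monomial ideal contained in `𝔪₀^{n−2}`, and membership in
`𝔪₀^N` only depends on the exponents of `x₁, x₂, x₃`. Hence a form `p` of degree `n − 3` with
`x₀^j p ∈ J` vanishes: this gives both `A_{n−3} = S_{n−3}`, of dimension `binomial(n, 3)`, and the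
injectivity of `x₀²`. In degree `n − 1`, a monomial with `x₀`-exponent at most `1` lies in `J`,
and every other one is `x₀²` times a monomial of degree `n − 3`, so `x₀²` is onto `A_{n−1}`.
-/

theorem Finsupp.filter_le {α M : Type*} [AddCommMonoid M] [PartialOrder M]
    [CanonicallyOrderedAdd M] (p : α → Prop) [DecidablePred p] (f : α →₀ M) :
    f.filter p ≤ f := fun i => by
  by_cases hi : p i <;> simp [hi]

namespace Submodule

theorem finrank_map_of_injOn {R M N : Type*} [Semiring R] [AddCommMonoid M] [AddCommMonoid N]
    [Module R M] [Module R N] {f : M →ₗ[R] N} {p : Submodule R M} (hf : Set.InjOn f p) :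
    Module.finrank R (p.map f) = Module.finrank R p := by
  have hinj : Function.Injective (f.domRestrict p) := fun x y h => Subtype.ext (hf x.2 y.2 h)
  rw [← LinearMap.range_domRestrict, (LinearEquiv.ofInjective _ hinj).finrank_eq]

end Submodule

namespace MvPolynomial

variable {σ R : Type*}

theorem finrank_homogeneousSubmodule [CommRing R] [Nontrivial R] [Fintype σ] (n : ℕ) :
    Module.finrank R (homogeneousSubmodule σ R n) = (Fintype.card σ + n - 1).choose n := by
  classical
  have hdeg : {d : σ →₀ ℕ | d.degree = n} =
      ↑(Finset.univ.finsuppAntidiag n : Finset (σ →₀ ℕ)) := by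
    ext d
    simp [Finsupp.degree_eq_sum]
  rw [homogeneousSubmodule_eq_finsupp_supported, hdeg,
    (AddMonoidAlgebra.supportedEquivFinsupp _).finrank_eq, Module.finrank_finsupp_self]
  simp [Finset.card_finsuppAntidiag_nat_eq_choose]

variable [CommSemiring R]

theorem pow_span_X_image_eq_span (s : Set σ) (n : ℕ) :
    Ideal.span (X '' s) ^ n =
      Ideal.span ((monomial · (1 : R)) '' {e | e.degree = n ∧ ↑e.support ⊆ s}) := by
  rw [Ideal.span, Submodule.span_pow, Finsupp.image_pow_eq_finsuppProd_image]
  simp [monomial_eq]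

theorem mem_pow_span_X_image_iff (s : Set σ) [DecidablePred (· ∈ s)] (n : ℕ)
    (p : MvPolynomial σ R) :
    p ∈ Ideal.span (X '' s) ^ n ↔ ∀ e ∈ p.support, n ≤ (e.filter (· ∈ s)).degree := by
  rw [pow_span_X_image_eq_span, mem_ideal_span_monomial_image]
  refine forall₂_congr fun e _ => ⟨?_, fun h => ?_⟩
  · rintro ⟨g, ⟨rfl, hgs⟩, hge⟩
    refine Finsupp.degree_mono fun i => ?_
    by_cases hi : i ∈ s
    · simpa [Finsupp.filter_apply_pos _ _ hi] using hge i
    · simp [Finsupp.notMem_support_iff.mp fun h => hi (hgs h)]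
  · obtain ⟨g, hge, rfl⟩ := Finsupp.exists_le_degree_eq _ _ h
    refine ⟨g, ⟨rfl, fun i hi => ?_⟩, hge.trans (Finsupp.filter_le _ _)⟩
    have := Finsupp.support_mono hge hi
    simp_all [Finsupp.support_filter]

theorem IsHomogeneous.eq_zero_of_mem_pow_span_X_image {s : Set σ} {n d : ℕ}
    {p : MvPolynomial σ R} (hp : p.IsHomogeneous d) (hpn : p ∈ Ideal.span (X '' s) ^ n)
    (hd : d < n) : p = 0 := by
  classical
  rw [mem_pow_span_X_image_iff] at hpn
  refine support_eq_empty.mp (Finset.eq_empty_of_forall_notMem fun e he => ?_)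
  have hfilter : (e.filter (· ∈ s)).degree ≤ e.degree :=
    Finsupp.degree_mono (Finsupp.filter_le _ _)
  have hdeg : e.degree = d := by
    rw [Finsupp.degree_eq_weight_one]
    exact hp (mem_support_iff.mp he)
  have := hpn e he
  omega

theorem mem_pow_span_X_image_of_X_pow_mul_mem {s : Set σ} {i : σ} (hi : i ∉ s) {j n : ℕ}
    {p : MvPolynomial σ R} (h : X i ^ j * p ∈ Ideal.span (X '' s) ^ n) :
    p ∈ Ideal.span (X '' s) ^ n := by
  classical
  rw [mem_pow_span_X_image_iff] at h ⊢
  intro e he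
  have hmem : Finsupp.single i j + e ∈ (X i ^ j * p).support := by
    rwa [X_pow_eq_monomial, mem_support_iff, coeff_monomial_mul, one_mul, ← mem_support_iff]
  simpa [Finsupp.filter_add, Finsupp.filter_single_of_neg _ hi] using h _ hmem

end MvPolynomial

section

variable {k : Type*} [Field k]

theorem idealM0_eq_span_X_image : idealM0 k = Ideal.span (X '' {1, 2, 3}) := by
  simp [idealM0, Set.image_insert_eq]

theorem monomial_mem_idealM0_pow {n : ℕ} {e : Fin 4 →₀ ℕ} (he : n ≤ e 1 + e 2 + e 3)
    (c : k) : monomial e c ∈ idealM0 k ^ n := by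
  classical
  rw [idealM0_eq_span_X_image, mem_pow_span_X_image_iff]
  intro f hf
  rw [Finset.mem_singleton.mp (support_monomial_subset hf), Finsupp.degree_eq_sum,
    Fin.sum_univ_four]
  simpa using he

theorem idealJ_le_idealM0_pow (m : ℕ) : idealJ k m ≤ idealM0 k ^ (m + 1) :=
  sup_le Ideal.mul_le_right (Ideal.pow_le_pow_right (by omega))

theorem monomial_mem_idealJ {m : ℕ} {e : Fin 4 →₀ ℕ} (he : e.degree = m + 2) (he0 : e 0 < 2)
    (c : k) : monomial e c ∈ idealJ k m := by
  rw [Finsupp.degree_eq_sum, Fin.sum_univ_four] at he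
  rcases (by omega : e 0 = 0 ∨ e 0 = 1) with h0 | h0
  · exact Ideal.mem_sup_right (monomial_mem_idealM0_pow (by omega) c)
  · obtain ⟨e', rfl⟩ : ∃ e', e = Finsupp.single 0 1 + e' :=
      le_iff_exists_add.mp (Finsupp.single_le_iff.mpr h0.ge)
    rw [← one_mul c, ← monomial_mul, ← X]
    refine Ideal.mem_sup_left (Ideal.mul_mem_mul (Ideal.mem_span_singleton_self _)
      (monomial_mem_idealM0_pow ?_ c))
    simp only [Finsupp.coe_add, Pi.add_apply, Finsupp.single_eq_same, ne_eq, Fin.reduceEq,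
      not_false_eq_true, Finsupp.single_eq_of_ne, zero_add] at he h0 ⊢
    omega

theorem homogeneousSubmodule_le_map_mulLeft_sup_idealJ (m : ℕ) :
    homogeneousSubmodule (Fin 4) k (m + 2) ≤
      (homogeneousSubmodule (Fin 4) k m).map (LinearMap.mulLeft k (X 0 ^ 2)) ⊔
        (idealJ k m).restrictScalars k := by
  rw [homogeneousSubmodule_eq_finsupp_supported, AddMonoidAlgebra.supported_eq_span_single,
    Submodule.span_le]
  rintro _ ⟨e, he, rfl⟩
  by_cases he0 : 2 ≤ e 0
  · obtain ⟨e', rfl⟩ : ∃ e', e = Finsupp.single 0 2 + e' :=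
      le_iff_exists_add.mp (Finsupp.single_le_iff.mpr he0)
    refine Submodule.mem_sup_left ⟨monomial e' 1, isHomogeneous_monomial _ ?_, ?_⟩
    · simp only [Set.mem_ofPred_eq, map_add, Finsupp.degree_single] at he
      omega
    · simp [X_pow_eq_monomial, monomial_mul, single_eq_monomial]
  · exact Submodule.mem_sup_right (monomial_mem_idealJ he (by omega) 1)

theorem mulX0sq_mk (m : ℕ) (p : MvPolynomial (Fin 4) k) :
    mulX0sq k m (Ideal.Quotient.mk (idealJ k m) p) = Ideal.Quotient.mk (idealJ k m) (X 0 ^ 2 * p) :=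
  (map_mul _ _ _).symm

theorem eq_zero_of_X0_pow_mul_mem_idealJ {m j : ℕ} {p : MvPolynomial (Fin 4) k}
    (hp : p.IsHomogeneous m) (h : X 0 ^ j * p ∈ idealJ k m) : p = 0 := by
  have hM := idealJ_le_idealM0_pow m h
  rw [idealM0_eq_span_X_image] at hM
  exact hp.eq_zero_of_mem_pow_span_X_image (mem_pow_span_X_image_of_X_pow_mul_mem (by simp) hM)
    m.lt_succ_self

theorem mk_injOn_homogeneousSubmodule (m : ℕ) :
    Set.InjOn (Ideal.Quotient.mkₐ k (idealJ k m)).toLinearMap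
      (homogeneousSubmodule (Fin 4) k m) := by
  intro p hp q hq h
  simp only [AlgHom.toLinearMap_apply, Ideal.Quotient.mkₐ_eq_mk, Ideal.Quotient.eq] at h
  exact sub_eq_zero.mp (eq_zero_of_X0_pow_mul_mem_idealJ (j := 0) (hp.sub hq) (by simpa using h))

theorem mulX0sq_injOn (m : ℕ) : Set.InjOn (mulX0sq k m) (Acomp k m m) := by
  rintro _ ⟨p, hp, rfl⟩ _ ⟨q, hq, rfl⟩ h
  simp only [AlgHom.toLinearMap_apply, Ideal.Quotient.mkₐ_eq_mk, mulX0sq_mk, Ideal.Quotient.eq,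
    ← mul_sub] at h ⊢
  rw [eq_zero_of_X0_pow_mul_mem_idealJ (hp.sub hq) h]
  exact zero_mem _

theorem map_mulX0sq_Acomp (m : ℕ) :
    (Acomp k m m).map (mulX0sq k m) = Acomp k m (m + 2) := by
  have hcomm : mulX0sq k m ∘ₗ (Ideal.Quotient.mkₐ k (idealJ k m)).toLinearMap =
      (Ideal.Quotient.mkₐ k (idealJ k m)).toLinearMap ∘ₗ LinearMap.mulLeft k (X 0 ^ 2) :=
    LinearMap.ext (mulX0sq_mk m)
  rw [Acomp, Acomp, ← Submodule.map_comp, hcomm, Submodule.map_comp]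
  refine le_antisymm (Submodule.map_mono ?_) ?_
  · rintro _ ⟨p, hp, rfl⟩
    simpa [add_comm] using (isHomogeneous_X_pow (0 : Fin 4) 2).mul hp
  · rw [Submodule.map_le_iff_le_comap, Submodule.comap_map_eq]
    convert homogeneousSubmodule_le_map_mulLeft_sup_idealJ m
    ext
    simp [Ideal.Quotient.eq_zero_iff_mem]

theorem finrank_Acomp_self (m : ℕ) : Module.finrank k (Acomp k m m) = (m + 3).choose 3 := by
  rw [Acomp, Submodule.finrank_map_of_injOn (mk_injOn_homogeneousSubmodule m),
    finrank_homogeneousSubmodule, Fintype.card_fin, show 4 + m - 1 = m + 3 by omega,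
    Nat.choose_symm_add]

end

/-- Let `k` be a field and `n = m + 3 ≥ 3`. In the graded algebra
`A = k[x₀, x₁, x₂, x₃]/(x₀·𝔪₀^{n−2} + 𝔪₀^{n−1})`, multiplication by `x₀²` defines a
`k`-linear bijection from `A_{n−3}` onto `A_{n−1}`, and both components have dimension
`binomial(n, 3)` over `k`. -/
theorem statement_6 {k : Type*} [Field k] (m : ℕ) :
    Set.InjOn (mulX0sq k m) (Acomp k m m) ∧
    Submodule.map (mulX0sq k m) (Acomp k m m) = Acomp k m (m + 2) ∧
    Module.finrank k ↥(Acomp k m m) = (m + 3).choose 3 ∧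
    Module.finrank k ↥(Acomp k m (m + 2)) = (m + 3).choose 3 := by
  refine ⟨mulX0sq_injOn m, map_mulX0sq_Acomp m, finrank_Acomp_self m, ?_⟩
  rw [← map_mulX0sq_Acomp, Submodule.finrank_map_of_injOn (mulX0sq_injOn m), finrank_Acomp_self]
end

section
/- Let k be a field, R = k[x₀,…,x_N] with N ≥ 1, and let F ∈ R be a nonzero homogeneous polynomial of degree d ≥ 2. Let J ⊆ R be the Jacobian ideal generated by the partial derivatives ∂F/∂x₀,…,∂F/∂x_N, and let J^sat = {f ∈ R : 𝔪^r·f ⊆ J for some r ≥ 0} be its saturation with respect to the irrelevant maximal ideal 𝔪 = (x₀,…,x_N). Suppose there is an integer m with 0 ≤ m < d−1 such that: (a) the only (N+1)-tuple (a₀,…,a_N) of homogeneous polynomials of degree 2m with Σᵢ aᵢ·∂F/∂xᵢ = 0 is the zero tuple; and (b) there exist nonzero homogeneous polynomials h₁, h₂ ∈ J^sat of degree m having no common non-unit factor. Then for every homogeneous polynomial g of degree d−1: g ∈ J if and only if g·h₁ ∈ J and g·h₂ ∈ J (equivalently, if and only if g·h ∈ J for every homogeneous h ∈ J^sat of degree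 m). -/
/-!
Write `g h₁ = ∑ aᵢ ∂ᵢF` and `g h₂ = ∑ bᵢ ∂ᵢF`; taking homogeneous components we may assume all
`aᵢ, bᵢ` homogeneous of degree `m`. Then `(aᵢ h₂ - bᵢ h₁)ᵢ` is a Jacobian syzygy of degree `2m`,
hence zero by (a). As `h₁` and `h₂` are coprime, `h₁` divides every `aᵢ`, and cancelling `h₁`
writes `g` as a combination of the partial derivatives of `F`.
-/

open MvPolynomial

/-- The Jacobian ideal of `F`, generated by the partial derivatives `∂F/∂xᵢ`. -/
noncomputable def jacobianIdeal {k : Type*} [Field k] {n : ℕ}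
    (F : MvPolynomial (Fin n) k) : Ideal (MvPolynomial (Fin n) k) :=
  Ideal.span (Set.range fun i => (MvPolynomial.pderiv i) F)

/-- The irrelevant maximal ideal `𝔪 = (x₀, …, x_N)`. -/
noncomputable def irrelevantIdeal (k : Type*) [Field k] (n : ℕ) :
    Ideal (MvPolynomial (Fin n) k) :=
  Ideal.span (Set.range (MvPolynomial.X : Fin n → MvPolynomial (Fin n) k))

namespace MvPolynomial

variable {σ R : Type*} [CommRing R]

theorem homogeneousComponent_add_mul_of_isHomogeneous {p : MvPolynomial σ R} {e : ℕ}
    (hp : p.IsHomogeneous e) (a : MvPolynomial σ R) (n : ℕ) :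
    homogeneousComponent (n + e) (a * p) = homogeneousComponent n a * p := by
  let := MvPolynomial.gradedAlgebra (σ := σ) (R := R)
  simpa only [DirectSum.decompose, Equiv.coe_fn_mk, decomposition.decompose'_apply] using
    DirectSum.coe_decompose_mul_add_of_right_mem (homogeneousSubmodule σ R) (a := a) (i := n)
      ((mem_homogeneousSubmodule e p).mpr hp)

theorem exists_isHomogeneous_coeffs_of_mem_span {ι : Type*} [Fintype ι]
    {v : ι → MvPolynomial σ R} {e n : ℕ} (hv : ∀ i, (v i).IsHomogeneous e)
    {p : MvPolynomial σ R} (hp : p.IsHomogeneous (n + e))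
    (hmem : p ∈ Ideal.span (Set.range v)) :
    ∃ a : ι → MvPolynomial σ R, (∀ i, (a i).IsHomogeneous n) ∧ ∑ i, a i * v i = p := by
  obtain ⟨a, ha⟩ := Ideal.mem_span_range_iff_exists_fun.mp hmem
  refine ⟨fun i => homogeneousComponent n (a i),
    fun i => homogeneousComponent_isHomogeneous n (a i), ?_⟩
  rw [← homogeneousComponent_eq_self hp, ← ha, map_sum]
  simp only [homogeneousComponent_add_mul_of_isHomogeneous (hv _)]

end MvPolynomial

section Koszul

variable {ι R : Type*} [Fintype ι] [CommRing R]

theorem sum_mul_sub_mul_mul_eq_zero {v a b : ι → R} {g h₁ h₂ : R}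
    (ha : ∑ i, a i * v i = g * h₁) (hb : ∑ i, b i * v i = g * h₂) :
    ∑ i, (a i * h₂ - b i * h₁) * v i = 0 := by
  have hsum : ∑ i, (a i * h₂ - b i * h₁) * v i
      = (∑ i, a i * v i) * h₂ - (∑ i, b i * v i) * h₁ := by
    rw [Finset.sum_mul, Finset.sum_mul, ← Finset.sum_sub_distrib]
    exact Finset.sum_congr rfl fun i _ => by ring
  rw [hsum, ha, hb]
  ring

theorem mem_span_range_of_dvd_coeffs [IsDomain R] {v a : ι → R} {g h : R} (h0 : h ≠ 0)
    (hdvd : ∀ i, h ∣ a i) (ha : ∑ i, a i * v i = g * h) :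
    g ∈ Ideal.span (Set.range v) := by
  choose c hc using hdvd
  have hg : g = ∑ i, c i * v i := by
    apply mul_right_cancel₀ h0
    rw [← ha, Finset.sum_mul]
    exact Finset.sum_congr rfl fun i _ => by rw [hc i]; ring
  exact hg ▸ Ideal.mem_span_range_iff_exists_fun.mpr ⟨c, rfl⟩

end Koszul

theorem statement_8_general {k : Type*} [Field k] (N d m : ℕ)
    (F : MvPolynomial (Fin (N + 1)) k) (hFhom : F.IsHomogeneous d)
    (hsyz : ∀ a : Fin (N + 1) → MvPolynomial (Fin (N + 1)) k,
      (∀ i, (a i).IsHomogeneous (2 * m)) →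
      (∑ i, a i * (MvPolynomial.pderiv i) F) = 0 → ∀ i, a i = 0)
    (h₁ h₂ : MvPolynomial (Fin (N + 1)) k)
    (hh₁0 : h₁ ≠ 0)
    (hh₁ : h₁.IsHomogeneous m) (hh₂ : h₂.IsHomogeneous m)
    (hnocommon : ∀ c : MvPolynomial (Fin (N + 1)) k, c ∣ h₁ → c ∣ h₂ → IsUnit c) :
    ∀ g : MvPolynomial (Fin (N + 1)) k, g.IsHomogeneous (d - 1) →
      (g ∈ jacobianIdeal F ↔ (g * h₁ ∈ jacobianIdeal F ∧ g * h₂ ∈ jacobianIdeal F)) := by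
  intro g hg
  refine ⟨fun hgJ => ⟨Ideal.mul_mem_right _ _ hgJ, Ideal.mul_mem_right _ _ hgJ⟩, ?_⟩
  rintro ⟨hg₁, hg₂⟩
  have hpderiv i : (pderiv i F).IsHomogeneous (d - 1) := hFhom.pderiv
  obtain ⟨a, ha, hag⟩ := exists_isHomogeneous_coeffs_of_mem_span hpderiv
    (add_comm (d - 1) m ▸ hg.mul hh₁) hg₁
  obtain ⟨b, hb, hbg⟩ := exists_isHomogeneous_coeffs_of_mem_span hpderiv
    (add_comm (d - 1) m ▸ hg.mul hh₂) hg₂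
  have hab : ∀ i, a i * h₂ - b i * h₁ = 0 :=
    hsyz _ (fun i => by rw [two_mul]; exact ((ha i).mul hh₂).sub ((hb i).mul hh₁))
      (sum_mul_sub_mul_mul_eq_zero hag hbg)
  have hrel : IsRelPrime h₁ h₂ := hnocommon
  exact mem_span_range_of_dvd_coeffs hh₁0
    (fun i => hrel.dvd_of_dvd_mul_right ⟨b i, by linear_combination hab i⟩) hag

/-- Let `R = k[x₀, …, x_N]` (`N ≥ 1`) and let `F ∈ R` be a nonzero homogeneous
polynomial of degree `d ≥ 2`, with Jacobian ideal `J`. Suppose there is `0 ≤ m < d − 1` with: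
(a) the only tuple `(a₀, …, a_N)` of homogeneous polynomials of degree `2m` with
`Σ aᵢ·∂F/∂xᵢ = 0` is zero; and (b) there are nonzero homogeneous `h₁, h₂` of degree `m`
in the saturation `J^sat` with no common non-unit factor. Then for every homogeneous `g` of
degree `d − 1`: `g ∈ J ↔ (g·h₁ ∈ J ∧ g·h₂ ∈ J)`. -/
theorem statement_8 {k : Type*} [Field k] (N d m : ℕ) (hN : 1 ≤ N) (hd : 2 ≤ d)
    (hm : m < d - 1)
    (F : MvPolynomial (Fin (N + 1)) k) (hF0 : F ≠ 0) (hFhom : F.IsHomogeneous d)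
    (hsyz : ∀ a : Fin (N + 1) → MvPolynomial (Fin (N + 1)) k,
      (∀ i, (a i).IsHomogeneous (2 * m)) →
      (∑ i, a i * (MvPolynomial.pderiv i) F) = 0 → ∀ i, a i = 0)
    (h₁ h₂ : MvPolynomial (Fin (N + 1)) k)
    (hh₁0 : h₁ ≠ 0) (hh₂0 : h₂ ≠ 0)
    (hh₁ : h₁.IsHomogeneous m) (hh₂ : h₂.IsHomogeneous m)
    (hsat₁ : ∃ r : ℕ, ∀ f ∈ (irrelevantIdeal k (N + 1)) ^ r, f * h₁ ∈ jacobianIdeal F)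
    (hsat₂ : ∃ r : ℕ, ∀ f ∈ (irrelevantIdeal k (N + 1)) ^ r, f * h₂ ∈ jacobianIdeal F)
    (hnocommon : ∀ c : MvPolynomial (Fin (N + 1)) k, c ∣ h₁ → c ∣ h₂ → IsUnit c) :
    ∀ g : MvPolynomial (Fin (N + 1)) k, g.IsHomogeneous (d - 1) →
      (g ∈ jacobianIdeal F ↔ (g * h₁ ∈ jacobianIdeal F ∧ g * h₂ ∈ jacobianIdeal F)) :=
  statement_8_general N d m F hFhom hsyz h₁ h₂ hh₁0 hh₁ hh₂ hnocommon
end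

section
/- Let k be a field, n ≥ 2 an integer, and φ : Matrix n n k → Matrix n n k a k-linear map. Let P ∈ k[x_{ij} : 1 ≤ i,j ≤ n] be the determinant of the n×n matrix of linear forms whose (i,j) entry is the (i,j) coordinate of φ applied to the generic matrix X = (x_{ij}). Then φ is bijective if and only if for every nonzero v ∈ Matrix n n k, the directional derivative Σ_{i,j} v_{ij}·∂P/∂x_{ij} is a nonzero polynomial. -/
/-!
By Jacobi's formula, the derivative of `P = det (φ X)` in the direction `v` is
`tr (adj (φ X) * φ v)`. If `φ v = 0` this vanishes, so the condition forces `φ` to be injective,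
hence bijective. Conversely, if `φ` is bijective and `φ v ≠ 0`, specialize `X` to `φ⁻¹ Y` for
a singular `Y` whose adjugate is `± single c r 1`, where `(φ v) r c ≠ 0`.
-/

open Matrix MvPolynomial

theorem Derivation.leibniz_prod {R A M : Type*} [CommSemiring R] [CommSemiring A] [Algebra R A]
    [AddCommMonoid M] [Module A M] [Module R M] (D : Derivation R A M)
    {ι : Type*} [DecidableEq ι] (s : Finset ι) (f : ι → A) :
    D (∏ i ∈ s, f i) = ∑ i ∈ s, (∏ j ∈ s.erase i, f j) • D (f i) := by
  induction s using Finset.induction_on with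
  | empty => simp
  | insert a s ha ih =>
    rw [Finset.prod_insert ha, leibniz, ih, Finset.sum_insert ha, Finset.erase_insert ha,
      Finset.smul_sum, add_comm]
    congr 1
    refine Finset.sum_congr rfl fun i hi => ?_
    rw [Finset.erase_insert_of_ne (ne_of_mem_of_not_mem hi ha).symm,
      Finset.prod_insert fun h => ha (Finset.mem_of_mem_erase h), mul_smul]

namespace Matrix

variable {n R : Type*} [Fintype n] [DecidableEq n] [CommRing R]

theorem det_updateCol_eq_sum_perm (M : Matrix n n R) (c : n) (g : n → R) :
    (M.updateCol c g).det =
      ∑ σ : Equiv.Perm n,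
        Equiv.Perm.sign σ • ((∏ j ∈ Finset.univ.erase c, M (σ j) j) * g (σ c)) := by
  rw [det_apply]
  refine Finset.sum_congr rfl fun σ _ => ?_
  rw [← Finset.prod_erase_mul _ _ (Finset.mem_univ c), updateCol_self]
  congr 2
  exact Finset.prod_congr rfl fun j hj => updateCol_ne (Finset.ne_of_mem_erase hj)

theorem sum_det_updateCol_eq_trace_adjugate_mul (M N : Matrix n n R) :
    ∑ c, (M.updateCol c fun r => N r c).det = trace (adjugate M * N) := by
  simp only [← cramer_apply, cramer_eq_adjugate_mulVec, trace, diag, mul_apply, mulVec,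
    dotProduct]

theorem _root_.Derivation.map_det {S A : Type*} [CommSemiring S] [CommRing A] [Algebra S A]
    (D : Derivation S A A) (M : Matrix n n A) :
    D M.det = trace (adjugate M * M.map D) := by
  rw [← sum_det_updateCol_eq_trace_adjugate_mul, det_apply, map_sum]
  simp only [det_updateCol_eq_sum_perm, map_apply]
  rw [Finset.sum_comm]
  refine Finset.sum_congr rfl fun σ _ => ?_
  rw [Units.smul_def, map_zsmul, D.leibniz_prod, Finset.smul_sum]
  simp only [smul_eq_mul, Units.smul_def]

theorem trace_adjugate_submatrix_updateCol_zero_mul (σ : Equiv.Perm n) (c : n)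
    (w : Matrix n n R) :
    trace (adjugate (((1 : Matrix n n R).updateCol c 0).submatrix σ id) * w) =
      Equiv.Perm.sign σ * w (σ.symm c) c := by
  rw [← sum_det_updateCol_eq_trace_adjugate_mul, Finset.sum_eq_single c]
  · have hupd := updateCol_submatrix_equiv ((1 : Matrix n n R).updateCol c 0) c (fun r => w r c) σ
      (Equiv.refl n)
    simp only [Equiv.coe_refl, Equiv.refl_apply] at hupd
    rw [hupd, det_permute, updateCol_idem, ← cramer_apply, cramer_one]
    rfl
  · intro j _ hj
    exact det_eq_zero_of_column_eq_zero c fun i => by simp [Ne.symm hj]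
  · simp

theorem exists_trace_adjugate_mul_ne_zero {w : Matrix n n R} (hw : w ≠ 0) :
    ∃ Y : Matrix n n R, trace (adjugate Y * w) ≠ 0 := by
  obtain ⟨r, c, hrc⟩ : ∃ r c, w r c ≠ 0 := by simpa [← Matrix.ext_iff] using hw
  refine ⟨((1 : Matrix n n R).updateCol c 0).submatrix (Equiv.swap r c) id, ?_⟩
  rw [trace_adjugate_submatrix_updateCol_zero_mul, Equiv.symm_swap, Equiv.swap_apply_right]
  rcases Int.units_eq_one_or (Equiv.Perm.sign (Equiv.swap r c)) with h | h <;> simp [h, hrc]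

end Matrix

namespace MvPolynomial

variable {σ k : Type*} [Fintype σ] [CommSemiring k]

noncomputable def directionalDerivation (v : σ → k) :
    Derivation k (MvPolynomial σ k) (MvPolynomial σ k) :=
  ∑ i, (C (v i) : MvPolynomial σ k) • pderiv i

theorem directionalDerivation_apply (v : σ → k) (f : MvPolynomial σ k) :
    directionalDerivation v f = ∑ i, C (v i) * pderiv i f := by
  rw [directionalDerivation, ← Derivation.coeFnAddMonoidHom_apply, map_sum, Finset.sum_apply]
  simp

end MvPolynomial

section LinearFormMatrix

variable {k m m' n n' : Type*} [CommSemiring k] [Fintype m] [Fintype m'] [DecidableEq m]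
  [DecidableEq m']

theorem LinearMap.sum_smul_apply_single {N : Type*} [AddCommMonoid N] [Module k N]
    (φ : Matrix m m' k →ₗ[k] N) (A : Matrix m m' k) :
    ∑ p : m × m', A p.1 p.2 • φ (Matrix.single p.1 p.2 1) = φ A := by
  simp_rw [← map_smul, ← map_sum, smul_single, smul_eq_mul, mul_one]
  rw [Fintype.sum_prod_type]
  exact congrArg φ (matrix_eq_sum_single A).symm

/-- `φ` applied to the generic matrix `of fun i j => X (i, j)`. -/
noncomputable def linearFormMatrix (φ : Matrix m m' k →ₗ[k] Matrix n n' k) :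
    Matrix n n' (MvPolynomial (m × m') k) :=
  of fun i j => ∑ p : m × m', X p * C (φ (single p.1 p.2 1) i j)

variable (φ : Matrix m m' k →ₗ[k] Matrix n n' k)

theorem linearFormMatrix_map_eval (A : Matrix m m' k) :
    (linearFormMatrix φ).map (eval fun p => A p.1 p.2) = φ A := by
  ext i j
  conv_rhs => rw [← φ.sum_smul_apply_single A]
  simp [linearFormMatrix, Matrix.sum_apply]

theorem directionalDerivation_linearFormMatrix (v : Matrix m m' k) (i : n) (j : n') :
    directionalDerivation (fun p : m × m' => v p.1 p.2) (linearFormMatrix φ i j) =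
      C (φ v i j) := by
  conv_rhs => rw [← φ.sum_smul_apply_single v]
  simp [directionalDerivation_apply, linearFormMatrix, Matrix.sum_apply, pderiv_X,
    Pi.single_apply, mul_comm]

end LinearFormMatrix

theorem eval_trace_adjugate_linearFormMatrix_mul {k m m' n : Type*} [CommRing k] [Fintype m]
    [Fintype m'] [DecidableEq m] [DecidableEq m'] [Fintype n] [DecidableEq n]
    (φ : Matrix m m' k →ₗ[k] Matrix n n k) (A : Matrix m m' k) (w : Matrix n n k) :
    eval (fun p => A p.1 p.2) (trace (adjugate (linearFormMatrix φ) * w.map C)) =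
      trace (adjugate (φ A) * w) := by
  have hadj := (eval fun p => A p.1 p.2).map_adjugate (linearFormMatrix φ)
  rw [RingHom.mapMatrix_apply, RingHom.mapMatrix_apply, linearFormMatrix_map_eval] at hadj
  have hw : (w.map C).map (eval fun p : m × m' => A p.1 p.2) = w := Matrix.ext fun _ _ => eval_C _
  rw [AddMonoidHom.map_trace, Matrix.map_mul, hadj, hw]

theorem statement_16_general {k : Type*} [Field k] (n : ℕ)
    (φ : Matrix (Fin n) (Fin n) k →ₗ[k] Matrix (Fin n) (Fin n) k)
    (P : MvPolynomial (Fin n × Fin n) k)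
    (hP : P = (Matrix.of fun i j : Fin n =>
        ∑ p : Fin n × Fin n,
          MvPolynomial.X p *
            (MvPolynomial.C (φ (Matrix.single p.1 p.2 1) i j) :
              MvPolynomial (Fin n × Fin n) k)).det) :
    Function.Bijective φ ↔
      ∀ v : Matrix (Fin n) (Fin n) k, v ≠ 0 →
        (∑ p : Fin n × Fin n,
          MvPolynomial.C (v p.1 p.2) * (MvPolynomial.pderiv p) P) ≠ 0 := by
  have hP_det : P = (linearFormMatrix φ).det := hP
  have hJacobi (v : Matrix (Fin n) (Fin n) k) :
      ∑ p : Fin n × Fin n, C (v p.1 p.2) * pderiv p P =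
        trace (adjugate (linearFormMatrix φ) * (φ v).map C) := by
    have hmap : (linearFormMatrix φ).map (directionalDerivation fun p => v p.1 p.2) =
        (φ v).map C :=
      Matrix.ext (directionalDerivation_linearFormMatrix φ v)
    rw [← directionalDerivation_apply, hP_det, Derivation.map_det, hmap]
  simp_rw [hJacobi]
  constructor
  · intro hφ v hv hzero
    have hφv : φ v ≠ 0 := (map_ne_zero_iff φ hφ.injective).mpr hv
    obtain ⟨Y, hY⟩ := exists_trace_adjugate_mul_ne_zero hφv
    obtain ⟨A, rfl⟩ := hφ.surjective Y
    apply hY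
    rw [← eval_trace_adjugate_linearFormMatrix_mul, hzero, map_zero]
  · intro h
    have hinj : Function.Injective φ := by
      refine (injective_iff_map_eq_zero φ).mpr fun v hv => ?_
      by_contra hv0
      exact h v hv0 (by simp [hv])
    exact ⟨hinj, LinearMap.injective_iff_surjective.mp hinj⟩

/-- Let `k` be a field, `n ≥ 2`, and `φ : Matrix n n k → Matrix n n k` a
`k`-linear map. Let `P ∈ k[x_{ij}]` be the determinant of the matrix of linear forms whose
`(i,j)` entry is the `(i,j)` coordinate of `φ` applied to the generic matrix `(x_{ij})`.
Then `φ` is bijective if and only if for every nonzero `v ∈ Matrix n n k`, the directional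
derivative `Σ_{ij} v_{ij}·∂P/∂x_{ij}` is a nonzero polynomial. -/
theorem statement_16 {k : Type*} [Field k] (n : ℕ) (hn : 2 ≤ n)
    (φ : Matrix (Fin n) (Fin n) k →ₗ[k] Matrix (Fin n) (Fin n) k)
    (P : MvPolynomial (Fin n × Fin n) k)
    (hP : P = (Matrix.of fun i j : Fin n =>
        ∑ p : Fin n × Fin n,
          MvPolynomial.X p *
            (MvPolynomial.C (φ (Matrix.single p.1 p.2 1) i j) :
              MvPolynomial (Fin n × Fin n) k)).det) :
    Function.Bijective φ ↔
      ∀ v : Matrix (Fin n) (Fin n) k, v ≠ 0 →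
        (∑ p : Fin n × Fin n,
          MvPolynomial.C (v p.1 p.2) * (MvPolynomial.pderiv p) P) ≠ 0 :=
  statement_16_general n φ P hP
end

section
/- Let k be a field, let N ≥ 2 and d ≥ 3 be integers, and assume the characteristic of k divides neither d nor d−1. In R = k[x₀,…,x_N] let F = x₀·x₁^{d−1} + Σ_{j=2}^N x_j^d and let J be the ideal generated by the partial derivatives of F. Then: (1) the radical of J equals the ideal (x₁,…,x_N), so the hypersurface D = V(F) is singular exactly at the single point (1:0:⋯:0); (2) the tuple ((d−1)x₀, −x₁, 0, …, 0) is a nonzero syzygy of (∂F/∂x₀, …, ∂F/∂x_N) with homogeneous linear entries, while the only syzygy with constant entries is zero. -/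
/-! The partial derivatives of `F` are `x₁^{d-1}`, `(d-1) x₀ x₁^{d-2}` and `d x_j^{d-1}` for
`j ≥ 2`. They all lie in the prime ideal `P = (x₁, …, x_N)`, the kernel of `x_i ↦ 0` for `i ≠ 0`;
conversely `x₁^{d-1}` and, as `d` is invertible, every `x_j^{d-1}` lie in `J`, so `√J = P`.
The partials are nonzero multiples of pairwise distinct monomials, hence linearly independent
over `k`, which is the statement about constant syzygies. -/

open MvPolynomial Finset

namespace Fin

variable {N : ℕ} [NeZero N]

theorem val_one_of_neZero : ((1 : Fin (N + 1)) : ℕ) = 1 :=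
  Nat.mod_eq_of_lt (by simp [NeZero.pos N])

theorem two_le_val_iff (i : Fin (N + 1)) : 2 ≤ (i : ℕ) ↔ i ≠ 0 ∧ i ≠ 1 := by
  simp only [ne_eq, Fin.ext_iff, val_one_of_neZero, val_zero]
  omega

end Fin

namespace MvPolynomial

variable {R σ : Type*}

theorem pderiv_sum_X_pow [CommSemiring R] [DecidableEq σ] (s : Finset σ) (d : ℕ) (i : σ) :
    pderiv i (∑ j ∈ s, X j ^ d : MvPolynomial σ R) =
      if i ∈ s then (d : MvPolynomial σ R) * X i ^ (d - 1) else 0 := by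
  simp [Pi.single_apply]

variable [CommRing R]

theorem sub_aeval_mem_span_X_image (s : Set σ) [DecidablePred (· ∈ s)] (p : MvPolynomial σ R) :
    p - aeval (fun i => if i ∈ s then 0 else X i) p ∈ Ideal.span (X '' s) := by
  set g : σ → MvPolynomial σ R := fun i => if i ∈ s then 0 else X i
  induction p using MvPolynomial.induction_on with
  | C a => simp
  | add p q hp hq => simpa [add_sub_add_comm] using add_mem hp hq
  | mul_X p i hp =>
    have hXi : X i - g i ∈ Ideal.span (X '' s : Set (MvPolynomial σ R)) := by
      by_cases hi : i ∈ s
      · simpa [g, hi] using Ideal.subset_span (Set.mem_image_of_mem X hi)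
      · simp [g, hi]
    rw [map_mul, aeval_X, show p * X i - aeval g p * g i
      = (p - aeval g p) * X i + aeval g p * (X i - g i) by ring]
    exact add_mem (Ideal.mul_mem_right _ _ hp) (Ideal.mul_mem_left _ _ hXi)

theorem isPrime_span_X_image [IsDomain R] (s : Set σ) :
    (Ideal.span (X '' s : Set (MvPolynomial σ R))).IsPrime := by
  classical
  set π : MvPolynomial σ R →ₐ[R] MvPolynomial σ R :=
    aeval fun i => if i ∈ s then 0 else X i
  suffices Ideal.span (X '' s) = RingHom.ker π from this ▸ RingHom.ker_isPrime π
  refine le_antisymm (Ideal.span_le.2 ?_) fun p hp => ?_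
  · rintro _ ⟨i, hi, rfl⟩
    simp [π, hi]
  · have hπp : aeval (fun i => if i ∈ s then 0 else X i) p = 0 := RingHom.mem_ker.1 hp
    simpa only [hπp, sub_zero] using sub_aeval_mem_span_X_image s p

theorem linearIndependent_of_eq_monomial {K ι : Type*} [Field K] {p : ι → MvPolynomial σ K}
    {μ : ι → σ →₀ ℕ} {c : ι → K} (hμ : Function.Injective μ) (hc : ∀ i, c i ≠ 0)
    (hp : ∀ i, p i = monomial (μ i) (c i)) : LinearIndependent K p := by
  have hv : LinearIndependent K fun i => monomial (μ i) (1 : K) :=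
    (basisMonomials σ K).linearIndependent.comp μ hμ
  have hp' : p = (fun i => Units.mk0 (c i) (hc i)) • fun i => monomial (μ i) (1 : K) := by
    funext i
    simp [hp, smul_monomial]
  exact hp' ▸ hv.units_smul _

end MvPolynomial

section IsolatedSingularity

variable (R : Type*) [CommSemiring R] (N d : ℕ)

noncomputable def isolatedSingularityPoly : MvPolynomial (Fin (N + 1)) R :=
  X 0 * X 1 ^ (d - 1) + ∑ j ∈ univ.filter (fun j : Fin (N + 1) => 2 ≤ (j : ℕ)), X j ^ d

variable {R N d}

variable [NeZero N]

theorem pderiv_zero_isolatedSingularityPoly :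
    pderiv 0 (isolatedSingularityPoly R N d) = X 1 ^ (d - 1) := by
  rw [isolatedSingularityPoly, map_add, pderiv_sum_X_pow,
    if_neg (by simp [Fin.two_le_val_iff])]
  simp

theorem pderiv_one_isolatedSingularityPoly :
    pderiv 1 (isolatedSingularityPoly R N d) =
      ((d - 1 : ℕ) : MvPolynomial (Fin (N + 1)) R) * X 0 * X 1 ^ (d - 2) := by
  rw [isolatedSingularityPoly, map_add, pderiv_sum_X_pow,
    if_neg (by simp [Fin.two_le_val_iff])]
  simp [Nat.sub_sub]
  ring

theorem pderiv_isolatedSingularityPoly_of_ne {j : Fin (N + 1)} (hj0 : j ≠ 0) (hj1 : j ≠ 1) :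
    pderiv j (isolatedSingularityPoly R N d) =
      (d : MvPolynomial (Fin (N + 1)) R) * X j ^ (d - 1) := by
  rw [isolatedSingularityPoly, map_add, pderiv_sum_X_pow,
    if_pos (by simp [Fin.two_le_val_iff, hj0, hj1])]
  simp [pderiv_X_of_ne hj0.symm, pderiv_X_of_ne hj1.symm]

end IsolatedSingularity

theorem syzygy_pderiv_isolatedSingularityPoly {R : Type*} [CommRing R] {N d : ℕ} [NeZero N]
    (hd : 2 ≤ d) :
    C ((d - 1 : ℕ) : R) * X 0 * pderiv 0 (isolatedSingularityPoly R N d) +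
      -X 1 * pderiv 1 (isolatedSingularityPoly R N d) = 0 := by
  obtain ⟨e, rfl⟩ : ∃ e, d = e + 2 := ⟨d - 2, by omega⟩
  rw [pderiv_zero_isolatedSingularityPoly, pderiv_one_isolatedSingularityPoly, map_natCast]
  simp only [Nat.add_sub_cancel, show e + 2 - 1 = e + 1 by omega]
  ring

section Field

variable {k : Type*} [Field k] {N d : ℕ} [NeZero N]

theorem radical_span_pderiv_isolatedSingularityPoly (hd : 3 ≤ d) (hdk : (d : k) ≠ 0) :
    (Ideal.span (Set.range fun i => pderiv i (isolatedSingularityPoly k N d))).radical =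
      Ideal.span (X '' {i | i ≠ 0}) := by
  set J := Ideal.span (Set.range fun i => pderiv i (isolatedSingularityPoly k N d))
  have hJ (i) : pderiv i (isolatedSingularityPoly k N d) ∈ J := Ideal.subset_span ⟨i, rfl⟩
  have hX {i : Fin (N + 1)} (hi : i ≠ 0) :
      (X i : MvPolynomial _ k) ∈ Ideal.span (X '' {i | i ≠ 0}) :=
    Ideal.subset_span (Set.mem_image_of_mem X hi)
  have h10 : (1 : Fin (N + 1)) ≠ 0 := Fin.one_pos'.ne'
  refine le_antisymm ((isPrime_span_X_image _).isRadical.radical_le_iff.2 (Ideal.span_le.2 ?_))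
    (Ideal.span_le.2 ?_)
  · rintro _ ⟨i, rfl⟩
    dsimp only
    rcases eq_or_ne i 0 with rfl | hi0
    · rw [pderiv_zero_isolatedSingularityPoly]
      exact Ideal.mem_of_dvd _ (dvd_pow_self _ (by omega)) (hX h10)
    rcases eq_or_ne i 1 with rfl | hi1
    · rw [pderiv_one_isolatedSingularityPoly]
      exact Ideal.mem_of_dvd _ ((dvd_pow_self _ (by omega)).mul_left _) (hX h10)
    · rw [pderiv_isolatedSingularityPoly_of_ne hi0 hi1]
      exact Ideal.mem_of_dvd _ ((dvd_pow_self _ (by omega)).mul_left _) (hX hi0)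
  · rintro _ ⟨i, hi0, rfl⟩
    refine ⟨d - 1, ?_⟩
    rcases eq_or_ne i 1 with rfl | hi1
    · exact pderiv_zero_isolatedSingularityPoly (R := k) (N := N) ▸ hJ 0
    · have hXi : (X i : MvPolynomial _ k) ^ (d - 1) =
          C (d : k)⁻¹ * pderiv i (isolatedSingularityPoly k N d) := by
        rw [pderiv_isolatedSingularityPoly_of_ne hi0 hi1, ← map_natCast C, ← mul_assoc, ← C_mul,
          inv_mul_cancel₀ hdk, C_1, one_mul]
      exact hXi ▸ J.mul_mem_left _ (hJ i)

theorem linearIndependent_pderiv_isolatedSingularityPoly (hd : 2 ≤ d) (hdk : (d : k) ≠ 0)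
    (hd1k : ((d - 1 : ℕ) : k) ≠ 0) :
    LinearIndependent k fun i => pderiv i (isolatedSingularityPoly k N d) := by
  classical
  set μ : Fin (N + 1) → Fin (N + 1) →₀ ℕ := fun i =>
    if i = 0 then .single 1 (d - 1) else if i = 1 then .single 0 1 + .single 1 (d - 2)
    else .single i (d - 1)
  set c : Fin (N + 1) → k := fun i =>
    if i = 0 then 1 else if i = 1 then ((d - 1 : ℕ) : k) else d
  have h10 : (1 : Fin (N + 1)) ≠ 0 := Fin.one_pos'.ne'
  have cases (i : Fin (N + 1)) : i = 0 ∨ i = 1 ∨ (i ≠ 0 ∧ i ≠ 1) := by tauto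
  refine linearIndependent_of_eq_monomial (μ := μ) (c := c) ?_ (fun i => ?_) (fun i => ?_)
  · -- exponents of different shapes already differ at the variable `0` or `1`
    intro i j h
    rcases cases i with rfl | rfl | ⟨hi0, hi1⟩ <;> rcases cases j with rfl | rfl | ⟨hj0, hj1⟩ <;>
      clear cases <;> simp only [μ, *, ↓reduceIte] at h
    all_goals first
      | rfl
      | exact Finsupp.single_left_injective (by omega) h
      | (have h0 := DFunLike.congr_fun h 0; have h1 := DFunLike.congr_fun h 1
         clear h; simp [Ne.symm, *] at h0 h1 <;> omega)
  · simp only [c]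
    split_ifs <;> simp_all
  · rcases cases i with rfl | rfl | ⟨hi0, hi1⟩
    · simp only [μ, c, ↓reduceIte, pderiv_zero_isolatedSingularityPoly, X_pow_eq_monomial]
    · simp only [μ, c, h10, ↓reduceIte, pderiv_one_isolatedSingularityPoly]
      rw [← map_natCast C, X_pow_eq_monomial, X, C_mul_monomial, monomial_mul, mul_one, mul_one]
    · simp only [μ, c, hi0, hi1, ↓reduceIte, pderiv_isolatedSingularityPoly_of_ne hi0 hi1]
      rw [← map_natCast C, X_pow_eq_monomial, C_mul_monomial, mul_one]

end Field

/-- Let `k` be a field, `N ≥ 2`, `d ≥ 3`, with `char k` dividing neither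
`d` nor `d − 1`. In `R = k[x₀, …, x_N]` let `F = x₀·x₁^{d−1} + Σ_{j=2}^N x_j^d` and let `J`
be its Jacobian ideal. Then: (1) the radical of `J` equals `(x₁, …, x_N)`; (2) the tuple
`((d−1)x₀, −x₁, 0, …, 0)` is a nonzero syzygy of the partial derivatives of `F` with
homogeneous linear entries, while the only syzygy with constant entries is zero. -/
theorem statement_17 {k : Type*} [Field k] (N d : ℕ) (hN : 2 ≤ N) (hd : 3 ≤ d)
    (hchar_d : ¬ (ringChar k ∣ d)) (hchar_d1 : ¬ (ringChar k ∣ (d - 1)))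
    (F : MvPolynomial (Fin (N + 1)) k)
    (hF : F = MvPolynomial.X 0 * MvPolynomial.X 1 ^ (d - 1)
        + ∑ j ∈ Finset.univ.filter (fun j : Fin (N + 1) => 2 ≤ (j : ℕ)),
            MvPolynomial.X j ^ d)
    (a : Fin (N + 1) → MvPolynomial (Fin (N + 1)) k)
    (ha : a = fun i =>
      if i = 0 then MvPolynomial.C ((d - 1 : ℕ) : k) * MvPolynomial.X 0
      else if i = 1 then - MvPolynomial.X 1
      else 0) :
    (Ideal.span (Set.range fun i => (MvPolynomial.pderiv i) F)).radical
        = Ideal.span {f | ∃ i : Fin (N + 1), i ≠ 0 ∧ f = MvPolynomial.X i} ∧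
    (∀ i, (a i).IsHomogeneous 1) ∧
    a ≠ 0 ∧
    (∑ i, a i * (MvPolynomial.pderiv i) F) = 0 ∧
    (∀ b : Fin (N + 1) → k,
      (∑ i, MvPolynomial.C (b i) * (MvPolynomial.pderiv i) F) = 0 → b = 0) := by
  have : NeZero N := ⟨by omega⟩
  have := ringChar.charP k
  have hdk : (d : k) ≠ 0 := mt (CharP.cast_eq_zero_iff k _ d).1 hchar_d
  have hd1k : ((d - 1 : ℕ) : k) ≠ 0 := mt (CharP.cast_eq_zero_iff k _ _).1 hchar_d1
  have h10 : (1 : Fin (N + 1)) ≠ 0 := Fin.one_pos'.ne'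
  obtain rfl : F = isolatedSingularityPoly k N d := hF
  subst ha
  refine ⟨?_, fun i => ?_, fun h => ?_, ?_, fun b hb => ?_⟩
  · have hvars : {f | ∃ i : Fin (N + 1), i ≠ 0 ∧ f = X i} =
        (X '' {i | i ≠ 0} : Set (MvPolynomial _ k)) := by
      ext f
      simp [eq_comm]
    rw [hvars]
    exact radical_span_pderiv_isolatedSingularityPoly hd hdk
  · dsimp only
    split_ifs
    · exact (isHomogeneous_X k 0).C_mul _
    · exact (isHomogeneous_X k 1).neg
    · exact isHomogeneous_zero _ _ _
  · simpa [h10] using congr_fun h 1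
  · rw [Fintype.sum_eq_add 0 1 h10.symm fun i hi => by simp [hi.1, hi.2]]
    simp only [h10, ↓reduceIte]
    exact syzygy_pderiv_isolatedSingularityPoly (by omega)
  · refine funext (Fintype.linearIndependent_iff.1
      (linearIndependent_pderiv_isolatedSingularityPoly (by omega) hdk hd1k) b ?_)
    simpa only [smul_eq_C_mul] using hb
end
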